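/- arXiv:1710.08775 — 4 statements merged into one kernel-verified Lean document; each statement's English description precedes it below -/
import Mathlib

section
/- For a HEDG G and subset W ⊆ V, the moralization of the marginalization (G^{marg∖W})^moral is a subgraph of the marginalization of the moralization (G^moral)^{marg∖W}, with the same node set V∖W. -/
namespace HedgPaper

variable {V : Type*}

/-- directed reachability: existence of a directed path (possibly trivial). -/
def Reach (E : V → V → Prop) : V → V → Prop := Relation.ReflTransGen E

/-- `v` and `w` lie in the same strongly connected component. -/
def InSC (E : V → V → Prop) (v w : V) : Prop := Reach E v w ∧ Reach E w v

/-- the set of ancestors of a set `Z`. -/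
def AncSet (E : V → V → Prop) (Z : Set V) : Set V := {v | ∃ z ∈ Z, Reach E v z}

/-- `H` is a simplicial complex over `V`. -/
def IsSimplicial (H : Set (Set V)) : Prop :=
  (∀ v : V, ({v} : Set V) ∈ H) ∧ ∀ F ∈ H, ∀ F' : Set V, F' ⊆ F → F' ∈ H

/-- direction of an edge on a path: forward, backward, or bidirected. -/
inductive EDir : Type
  | fwd | bwd | bi

/-- one step of a walk in a HEDG. -/
structure Step (V : Type*) where
  src : V
  dir : EDir
  dst : V

/-- the step is an actual (directed or bidirected) edge of the HEDG `(V,E,H)`. -/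
def Step.Valid (E : V → V → Prop) (H : Set (Set V)) (s : Step V) : Prop :=
  match s.dir with
  | .fwd => E s.src s.dst
  | .bwd => E s.dst s.src
  | .bi  => s.src ≠ s.dst ∧ ({s.src, s.dst} : Set V) ∈ H

/-- the step has an arrowhead at its destination. -/
def Step.HeadAtDst (s : Step V) : Prop := s.dir = EDir.fwd ∨ s.dir = EDir.bi

/-- the step has an arrowhead at its source. -/
def Step.HeadAtSrc (s : Step V) : Prop := s.dir = EDir.bwd ∨ s.dir = EDir.bi

/-- `l` is a walk (path, possibly with repeated nodes) from `x` to `y` in `(V,E,H)`. -/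
def IsWalk (E : V → V → Prop) (H : Set (Set V)) : List (Step V) → V → V → Prop
  | [], x, y => x = y
  | s :: l, x, y => s.src = x ∧ s.Valid E H ∧ IsWalk E H l s.dst y

/-- all interior nodes of the walk are `Z`-open in the d-separation sense:
colliders are ancestors of `Z`, non-colliders are not in `Z`. -/
def DInteriorOpen (E : V → V → Prop) (Z : Set V) : List (Step V) → Prop
  | [] => True
  | [_] => True
  | s :: t :: l =>
      ((s.HeadAtDst ∧ t.HeadAtSrc) → s.dst ∈ AncSet E Z) ∧
      (¬ (s.HeadAtDst ∧ t.HeadAtSrc) → s.dst ∉ Z) ∧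
      DInteriorOpen E Z (t :: l)

/-- `X` is d-separated from `Y` given `Z` in the HEDG `(V,E,H)`:
every walk from `X` to `Y` is `Z`-blocked. -/
def DSep (E : V → V → Prop) (H : Set (Set V)) (X Y Z : Set V) : Prop :=
  ∀ x ∈ X, ∀ y ∈ Y, ∀ l : List (Step V),
    IsWalk E H l x y → ¬ (x ∉ Z ∧ y ∉ Z ∧ DInteriorOpen E Z l)

/-- all interior nodes of the walk are `Z`-σ-open: colliders are ancestors of `Z`,
and a non-collider in `Z` must not point (via a directed edge of the path) to a
node outside of its strongly connected component. -/
def SigmaInteriorOpen (E : V → V → Prop) (Z : Set V) : List (Step V) → Prop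
  | [] => True
  | [_] => True
  | s :: t :: l =>
      ((s.HeadAtDst ∧ t.HeadAtSrc) → s.dst ∈ AncSet E Z) ∧
      (¬ (s.HeadAtDst ∧ t.HeadAtSrc) →
        ¬ (s.dst ∈ Z ∧ ((¬ s.HeadAtDst ∧ ¬ InSC E s.dst s.src) ∨
                        (¬ t.HeadAtSrc ∧ ¬ InSC E s.dst t.dst)))) ∧
      SigmaInteriorOpen E Z (t :: l)

/-- `X` is σ-separated from `Y` given `Z` in the HEDG `(V,E,H)`. -/
def SigmaSep (E : V → V → Prop) (H : Set (Set V)) (X Y Z : Set V) : Prop :=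
  ∀ x ∈ X, ∀ y ∈ Y, ∀ l : List (Step V),
    IsWalk E H l x y → ¬ (x ∉ Z ∧ y ∉ Z ∧ SigmaInteriorOpen E Z l)

/-- directed edges of the marginalization of `(V,E,H)` w.r.t. (i.e. after removing) `U`:
`a → b` iff there is a directed path `a → u₁ → ⋯ → u_r → b` in `G` with all `uᵢ ∈ U`. -/
def MargE (E : V → V → Prop) (U : Set V) : V → V → Prop :=
  fun a b => a ∉ U ∧ b ∉ U ∧
    ∃ c, Relation.ReflTransGen (fun x y => E x y ∧ y ∈ U) a c ∧ E c b

/-- hyperedges of the marginalization of `(V,E,H)` w.r.t. `U`. -/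
def MargH (E : V → V → Prop) (H : Set (Set V)) (U : Set V) : Set (Set V) :=
  {F' | (∀ v ∈ F', v ∉ U) ∧ ∃ F ∈ H, F ⊆ F' ∪ U ∧
    ∀ v ∈ F', (v ∈ F ∧ v ∉ U) ∨
      ∃ u ∈ F ∩ U, ∃ c, Relation.ReflTransGen (fun x y => E x y ∧ y ∈ U) u c ∧ E c v}

/-- bidirected-edge relation induced by the hyperedges. -/
def BiRel (H : Set (Set V)) : V → V → Prop :=
  fun x y => x ≠ y ∧ ({x, y} : Set V) ∈ H

/-- (generalized) moralization of a HEDG: `v — w` iff there are `a`, `b` with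
`v ∈ {a} ∪ Pa(a)`, `w ∈ {b} ∪ Pa(b)` and a bidirected chain `a ↔ ⋯ ↔ b`. -/
def MoralE (E : V → V → Prop) (H : Set (Set V)) : V → V → Prop :=
  fun v w => v ≠ w ∧ ∃ a b, (v = a ∨ E v a) ∧ (w = b ∨ E w b) ∧
    Relation.ReflTransGen (BiRel H) a b

/-- moralization of a directed graph: undirected versions of the directed edges plus
edges between distinct parents of a common child. -/
def MoralDirE (E : V → V → Prop) : V → V → Prop :=
  fun v w => v ≠ w ∧ (E v w ∨ E w v ∨ ∃ c, E v c ∧ E w c)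

/-- marginalization of an undirected graph `A` w.r.t. `W`: `a — b` iff there is a path
from `a` to `b` with all intermediate nodes in `W`. -/
def MargUnd (A : V → V → Prop) (W : Set V) : V → V → Prop :=
  fun a b => a ∉ W ∧ b ∉ W ∧ a ≠ b ∧
    ∃ c, Relation.ReflTransGen (fun x y => A x y ∧ y ∈ W) a c ∧ A c b

/-- separation in an undirected graph: every path from `X` to `Y` contains a node of
`Z` (including the endnodes). -/
def USep (A : V → V → Prop) (X Y Z : Set V) : Prop :=
  ∀ x ∈ X, ∀ y ∈ Y,
    ¬ (x ∉ Z ∧ Relation.ReflTransGen (fun a b => A a b ∧ b ∉ Z) x y)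

/-- edges of the induced sub-HEDG on `A`. -/
def InducedE (E : V → V → Prop) (A : Set V) : V → V → Prop :=
  fun a b => a ∈ A ∧ b ∈ A ∧ E a b

/-- hyperedges of the induced sub-HEDG on `A`. -/
def InducedH (H : Set (Set V)) (A : Set V) : Set (Set V) := {F | F ∈ H ∧ F ⊆ A}

/-- `F` is an inclusion-maximal hyperedge of `H`. -/
def MaximalHyperedge (H : Set (Set V)) (F : Set V) : Prop :=
  F ∈ H ∧ ∀ F' ∈ H, F ⊆ F' → F' = F

/-- edges of the augmented directed graph of a HEDG: the original directed edges plus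
`e_F → v` for every maximal hyperedge `F` and every `v ∈ F`. -/
def AugE (E : V → V → Prop) (H : Set (Set V)) :
    V ⊕ {F : Set V // MaximalHyperedge H F} →
    V ⊕ {F : Set V // MaximalHyperedge H F} → Prop
  | .inl v, .inl w => E v w
  | .inr F, .inl v => v ∈ F.1
  | _, _ => False

/-- the trivial simplicial complex (only subsingleton hyperedges), making a directed
graph a HEDG without bidirected edges. -/
def TrivialH (W : Type*) : Set (Set W) := {F | Set.Subsingleton F}

/-- directed edges of the acyclification of a HEDG. -/
def AcyE (E : V → V → Prop) : V → V → Prop :=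
  fun v w => ¬ InSC E v w ∧ ∃ w', InSC E w w' ∧ E v w'

/-- hyperedges of the acyclification of a HEDG. -/
def AcyH (E : V → V → Prop) (H : Set (Set V)) : Set (Set V) :=
  {F' | ∃ F ∈ H, ∀ x ∈ F', ∃ v ∈ F, InSC E v x}

/-!
Let `v — w` be an edge of `(G^{marg∖W})^moral`, witnessed by a bidirected chain `a ↔ ⋯ ↔ b`
of the marginal with `v ∈ {a} ∪ Pa(a)` and `w ∈ {b} ∪ Pa(b)` there. Marginal edges and
hyperedges unfold into directed paths through `W` attached to edges and hyperedges of `G`,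
and all of these are edges of `G^moral`. Walking along the chain, each node `x` stays in the
bidirected district of `G` of a node `p` which is, or is a child of, some `c ∈ {v} ∪ W` joined to
`v` by a moral path through `W`. Then `c` is a moral neighbour of every node of `{x} ∪ Pa(x)`, so
these are joined to `v` as well; at `x = b` this gives the required path from `v` to `w`.
-/

open Relation

section UndirectedPaths

variable {A : V → V → Prop} {W : Set V} {x y z : V}

/-- `x = y`, or `x` and `y` are joined by an `A`-path all of whose interior nodes lie in `W`. -/
def JoinedVia (A : V → V → Prop) (W : Set V) (x y : V) : Prop :=
  x = y ∨ ∃ c, ReflTransGen (fun a b => A a b ∧ b ∈ W) x c ∧ A c y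

theorem eq_or_mem_of_reflTransGen_into (h : ReflTransGen (fun a b => A a b ∧ b ∈ W) x y) :
    y = x ∨ y ∈ W := by
  rcases h.cases_tail with rfl | ⟨_, _, -, hy⟩
  · exact Or.inl rfl
  · exact Or.inr hy

namespace JoinedVia

theorem of_reflTransGen (h : ReflTransGen (fun a b => A a b ∧ b ∈ W) x y) :
    JoinedVia A W x y := by
  rcases h.cases_tail with rfl | ⟨c, hxc, hcy, -⟩
  · exact Or.inl rfl
  · exact Or.inr ⟨c, hxc, hcy⟩

theorem trans (hxy : JoinedVia A W x y) (hy : y ∈ W) (hyz : JoinedVia A W y z) :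
    JoinedVia A W x z := by
  rcases hxy with rfl | ⟨c, hxc, hcy⟩
  · exact hyz
  rcases hyz with rfl | ⟨d, hyd, hdz⟩
  · exact Or.inr ⟨c, hxc, hcy⟩
  · exact Or.inr ⟨d, (hxc.tail ⟨hcy, hy⟩).trans hyd, hdz⟩

theorem symm [Std.Symm A] (h : JoinedVia A W x y) : JoinedVia A W y x := by
  rcases h with rfl | ⟨c, hxc, hcy⟩
  · exact Or.inl rfl
  induction hxc using ReflTransGen.head_induction_on with
  | refl => exact Or.inr ⟨y, .refl, Std.Symm.symm _ _ hcy⟩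
  | head hxd _ ih => exact ih.trans hxd.2 (Or.inr ⟨_, .refl, Std.Symm.symm _ _ hxd.1⟩)

end JoinedVia

theorem margUnd_of_joinedVia (hx : x ∉ W) (hy : y ∉ W) (hxy : x ≠ y)
    (h : JoinedVia A W x y) : MargUnd A W x y :=
  ⟨hx, hy, hxy, h.resolve_left hxy⟩

end UndirectedPaths

section Moralization

variable {E : V → V → Prop} {H : Set (Set V)} {W : Set V} {u v w x y : V}

instance : Std.Symm (BiRel H) :=
  ⟨fun _ _ h => ⟨h.1.symm, Set.pair_comm _ _ ▸ h.2⟩⟩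

instance : Std.Symm (MoralE E H) :=
  ⟨fun _ _ ⟨hne, a, b, ha, hb, hab⟩ => ⟨hne.symm, b, a, hb, ha, Std.Symm.symm _ _ hab⟩⟩

theorem moralE_left_mem {S : Set V} (hE : ∀ a b, E a b → a ∈ S ∧ b ∈ S) (hH : ∀ F ∈ H, F ⊆ S)
    (h : MoralE E H v w) : v ∈ S := by
  obtain ⟨hne, a, b, rfl | hva, hwb, hab⟩ := h
  · rcases hab.cases_head with rfl | ⟨c, hvc, -⟩
    · rcases hwb with rfl | hwv
      · exact absurd rfl hne
      · exact (hE _ _ hwv).2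
    · exact hH _ hvc.2 (Set.mem_insert v {c})
  · exact (hE _ _ hva).1

theorem joinedVia_moralE_of_reflTransGen (h : ReflTransGen (fun a b => E a b ∧ b ∈ W) u v) :
    JoinedVia (MoralE E H) W u v := by
  refine .of_reflTransGen (ReflTransGen.lift' id (fun a b hab => ?_) _ _ h)
  by_cases hne : a = b
  · exact hne ▸ .refl
  · exact .single ⟨⟨hne, b, b, Or.inr hab.1, Or.inl rfl, .refl⟩, hab.2⟩

theorem biRel_of_mem_hyperedge (hH : IsSimplicial H) {F : Set V} (hF : F ∈ H) (hx : x ∈ F)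
    (hy : y ∈ F) (hxy : x ≠ y) : BiRel H x y :=
  ⟨hxy, hH.2 F hF _ (Set.insert_subset_iff.mpr ⟨hx, Set.singleton_subset_iff.mpr hy⟩)⟩

def DistrictReached (E : V → V → Prop) (H : Set (Set V)) (W : Set V) (v x : V) : Prop :=
  ∃ c p, (c = v ∨ c ∈ W) ∧ JoinedVia (MoralE E H) W v c ∧ (p = c ∨ E c p) ∧
    ReflTransGen (BiRel H) p x

namespace DistrictReached

theorem joinedVia (hx : DistrictReached E H W v x) (hy : y = x ∨ E y x) :
    JoinedVia (MoralE E H) W v y := by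
  obtain ⟨c, p, hc, hvc, hcp, hpx⟩ := hx
  by_cases hcy : c = y
  · exact hcy ▸ hvc
  have hcy' : JoinedVia (MoralE E H) W c y :=
    Or.inr ⟨c, .refl, hcy, p, x, hcp.imp Eq.symm id, hy, hpx⟩
  rcases hc with rfl | hcW
  · exact hcy'
  · exact hvc.trans hcW hcy'

theorem joinedVia_of_reflTransGen (hx : DistrictReached E H W v x)
    (huc : ReflTransGen (fun a b => E a b ∧ b ∈ W) u w) (hwx : E w x) :
    JoinedVia (MoralE E H) W v u := by
  have hvw := hx.joinedVia (Or.inr hwx)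
  rcases eq_or_mem_of_reflTransGen_into huc with rfl | hwW
  · exact hvw
  · exact hvw.trans hwW (joinedVia_moralE_of_reflTransGen huc).symm

theorem of_mem_hyperedge (hH : IsSimplicial H) {F : Set V} (hF : F ∈ H) (hx : x ∈ F)
    (hy : y ∈ F) (h : DistrictReached E H W v x) : DistrictReached E H W v y := by
  by_cases hxy : x = y
  · exact hxy ▸ h
  obtain ⟨c, p, hc, hvc, hcp, hpx⟩ := h
  exact ⟨c, p, hc, hvc, hcp, hpx.tail (biRel_of_mem_hyperedge hH hF hx hy hxy)⟩

/-- `{x, y}` comes from some `F ∈ H` that `x` and `y` belong to or reach by directed paths through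
`W`: the invariant passes from `x` to a node of `F`, and from there to `y`. -/
theorem of_margH (hH : IsSimplicial H) (hxy : ({x, y} : Set V) ∈ MargH E H W)
    (hx : DistrictReached E H W v x) : DistrictReached E H W v y := by
  obtain ⟨-, F, hF, -, hlink⟩ := hxy
  obtain ⟨q, hqF, hq⟩ : ∃ q ∈ F, DistrictReached E H W v q := by
    rcases hlink x (Set.mem_insert x {y}) with ⟨hxF, -⟩ | ⟨u, ⟨huF, huW⟩, c, huc, hcx⟩
    · exact ⟨x, hxF, hx⟩
    · exact ⟨u, huF, u, u, Or.inr huW, hx.joinedVia_of_reflTransGen huc hcx, Or.inl rfl, .refl⟩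
  rcases hlink y (Set.mem_insert_of_mem x rfl) with ⟨hyF, -⟩ | ⟨u, ⟨huF, huW⟩, c, huc, hcy⟩
  · exact hq.of_mem_hyperedge hH hF hqF hyF
  · have hvc : JoinedVia (MoralE E H) W v c :=
      ((hq.of_mem_hyperedge hH hF hqF huF).joinedVia (Or.inl rfl)).trans huW
        (joinedVia_moralE_of_reflTransGen huc)
    have hcW : c ∈ W := (eq_or_mem_of_reflTransGen_into huc).elim (· ▸ huW) id
    exact ⟨c, y, Or.inr hcW, hvc, Or.inr hcy, .refl⟩

theorem of_reflTransGen_margH (hH : IsSimplicial H)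
    (hxy : ReflTransGen (BiRel (MargH E H W)) x y) (hx : DistrictReached E H W v x) :
    DistrictReached E H W v y := by
  induction hxy with
  | refl => exact hx
  | tail _ hstep ih => exact ih.of_margH hH hstep.2

end DistrictReached

end Moralization

theorem moral_marg_subgraph_of_marg_moral_general {V : Type*}
    (E : V → V → Prop) (H : Set (Set V)) (hH : IsSimplicial H) (W : Set V) :
    ∀ v w : V, MoralE (MargE E W) (MargH E H W) v w → MargUnd (MoralE E H) W v w := by
  intro v w hvw
  have outside : ∀ {x y}, MoralE (MargE E W) (MargH E H W) x y → x ∈ Wᶜ :=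
    moralE_left_mem (fun _ _ h => ⟨h.1, h.2.1⟩) (fun _ hF => hF.1)
  have hv : v ∉ W := outside hvw
  have hw : w ∉ W := outside (Std.Symm.symm _ _ hvw)
  obtain ⟨hne, a, b, hva, hwb, hab⟩ := hvw
  have ha : DistrictReached E H W v a := by
    rcases hva with rfl | ⟨-, -, c, hvc, hca⟩
    · exact ⟨v, v, Or.inl rfl, Or.inl rfl, Or.inl rfl, .refl⟩
    · exact ⟨c, a, eq_or_mem_of_reflTransGen_into hvc, joinedVia_moralE_of_reflTransGen hvc,
        Or.inr hca, .refl⟩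
  have hb := ha.of_reflTransGen_margH hH hab
  have hjoin : JoinedVia (MoralE E H) W v w := by
    rcases hwb with rfl | ⟨-, -, c, hwc, hcb⟩
    · exact hb.joinedVia (Or.inl rfl)
    · exact hb.joinedVia_of_reflTransGen hwc hcb
  exact margUnd_of_joinedVia hv hw hne hjoin

/-- For a HEDG `G` and `W ⊆ V`, the moralization of the
marginalization `(G^{marg∖W})^moral` is an undirected subgraph of the marginalization of
the moralization `(G^moral)^{marg∖W}` (both with node set `V∖W`). -/
theorem moral_marg_subgraph_of_marg_moral {V : Type*} [Fintype V]
    (E : V → V → Prop) (H : Set (Set V)) (hH : IsSimplicial H) (W : Set V) :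
    ∀ v w : V, MoralE (MargE E W) (MargH E H W) v w → MargUnd (MoralE E H) W v w :=
  moral_marg_subgraph_of_marg_moral_general E H hH W

end HedgPaper
end

section
/- σ-separation implies d-separation in a HEDG: for any HEDG G=(V,E,H) and subsets X,Y,Z ⊆ V, if X is σ-separated from Y given Z then X is d-separated from Y given Z. -/
namespace HedgPaper

variable {V : Type*}

theorem DInteriorOpen.sigmaInteriorOpen {E : V → V → Prop} {Z : Set V} :
    ∀ {l : List (Step V)}, DInteriorOpen E Z l → SigmaInteriorOpen E Z l
  | [], _ => trivial
  | [_], _ => trivial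
  | _ :: _ :: _, ⟨hcollider, hnoncollider, htail⟩ =>
      ⟨hcollider, fun hnc hσ => hnoncollider hnc hσ.1, htail.sigmaInteriorOpen⟩

theorem sigmaSep_implies_dSep_general {V : Type*}
    (E : V → V → Prop) (H : Set (Set V)) (X Y Z : Set V) :
    SigmaSep E H X Y Z → DSep E H X Y Z :=
  fun hσ x hx y hy l hl ⟨hxZ, hyZ, hopen⟩ =>
    hσ x hx y hy l hl ⟨hxZ, hyZ, hopen.sigmaInteriorOpen⟩

/-- σ-separation implies d-separation in a HEDG: if `X` is σ-separated
from `Y` given `Z` then `X` is d-separated from `Y` given `Z`. -/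
theorem sigmaSep_implies_dSep {V : Type*} [Fintype V]
    (E : V → V → Prop) (H : Set (Set V)) (hH : IsSimplicial H) (X Y Z : Set V) :
    SigmaSep E H X Y Z → DSep E H X Y Z :=
  sigmaSep_implies_dSep_general E H X Y Z

end HedgPaper
end

section
/- σ-separation in a HEDG G is equivalent to d-separation in its acyclification G^acy: for all subsets X,Y,Z ⊆ V, X ⟂_G^σ Y | Z if and only if X ⟂_{G^acy}^d Y | Z. -/
namespace HedgPaper

variable {V : Type*}

/-!
Every edge of `G` between two different strongly connected components is an edge of `G^acy` of
the same kind, and its ends that carry arrowheads may be moved freely inside their components;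
any two nodes of one component are joined by a bidirected edge of `G^acy`.

A d-open walk of `G^acy` expands into a σ-open walk of `G`: an edge of `G^acy` is realized by a
directed walk inside the component of one end, an edge of `G`, and a directed walk inside the
component of the other end. The new interior nodes are non-colliders whose tails point inside
their own component; at an old node an arrowhead of `G^acy` may turn into a tail, but only
into one pointing inside the component of that node.

A σ-open walk of `G` is compressed component by component. A maximal stretch inside one
component is replaced by the nodes where it is entered or left through a tail (the end nodes of
the walk count as such), joined by a bidirected edge of `G^acy` if there are two of them;
σ-openness puts these nodes outside `Z`, since their tails leave the component. A stretch entered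
and left through arrowheads contains a collider, so its component lies in `Anc(Z)` and contains
an ancestor of `Z` in `G^acy`, which replaces the stretch.
-/

section Acyclification

variable {E : V → V → Prop} {H : Set (Set V)} {Z : Set V}

theorem InSC.refl (v : V) : InSC E v v := ⟨.refl, .refl⟩

theorem InSC.symm {v w : V} (h : InSC E v w) : InSC E w v := ⟨h.2, h.1⟩

theorem InSC.trans {u v w : V} (h : InSC E u v) (h' : InSC E v w) : InSC E u w :=
  ⟨h.1.trans h'.1, h'.2.trans h.2⟩

theorem mem_ancSet_of_inSC {u v : V} (h : InSC E u v) (hu : u ∈ AncSet E Z) :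
    v ∈ AncSet E Z :=
  let ⟨z, hz, huz⟩ := hu
  ⟨z, hz, h.2.trans huz⟩

theorem reach_of_acyE {v w : V} (h : AcyE E v w) : Reach E v w :=
  let ⟨_, _, hww', hvw'⟩ := h
  .head hvw' hww'.2

theorem ancSet_acyE_subset : AncSet (AcyE E) Z ⊆ AncSet E Z := by
  rintro v ⟨z, hz, hvz⟩
  exact ⟨z, hz, Relation.ReflTransGen.lift' id (fun _ _ => reach_of_acyE) _ _ hvz⟩

theorem exists_inSC_mem_ancSet_acyE {v : V} (h : v ∈ AncSet E Z) :
    ∃ s, InSC E v s ∧ s ∈ AncSet (AcyE E) Z := by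
  obtain ⟨z, hz, hvz⟩ := h
  induction hvz using Relation.ReflTransGen.head_induction_on with
  | refl => exact ⟨z, .refl z, z, hz, .refl⟩
  | @head a c hac _ ih =>
    obtain ⟨s, hcs, z', hz', hsz⟩ := ih
    by_cases hac' : InSC E a c
    · exact ⟨s, hac'.trans hcs, z', hz', hsz⟩
    · exact ⟨a, .refl a, z', hz', .head ⟨fun h => hac' (h.trans hcs.symm), c, hcs.symm, hac⟩ hsz⟩

theorem pair_mem_acyH {a b a' b' : V} (hab : ({a, b} : Set V) ∈ H) (ha : InSC E a a')
    (hb : InSC E b b') : ({a', b'} : Set V) ∈ AcyH E H := by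
  refine ⟨{a, b}, hab, ?_⟩
  rintro x (rfl | rfl)
  exacts [⟨a, .inl rfl, ha⟩, ⟨b, .inr rfl, hb⟩]

theorem exists_pair_of_pair_mem_acyH (hH : ∀ F ∈ H, ∀ F' : Set V, F' ⊆ F → F' ∈ H) {v w : V}
    (h : ({v, w} : Set V) ∈ AcyH E H) :
    ∃ p q, InSC E p v ∧ InSC E q w ∧ ({p, q} : Set V) ∈ H := by
  obtain ⟨F, hF, hcover⟩ := h
  obtain ⟨p, hp, hpv⟩ := hcover v (.inl rfl)
  obtain ⟨q, hq, hqw⟩ := hcover w (.inr rfl)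
  exact ⟨p, q, hpv, hqw, hH F hF _ (Set.insert_subset hp (Set.singleton_subset_iff.2 hq))⟩

theorem Step.headAtSrc_of_not_headAtDst {s : Step V} (h : ¬s.HeadAtDst) : s.HeadAtSrc := by
  obtain ⟨_, _ | _ | _, _⟩ := s <;> simp_all [Step.HeadAtDst, Step.HeadAtSrc]

theorem Step.Valid.acyE_of_not_inSC {t : Step V} (ht : t.Valid E H)
    (hout : ¬InSC E t.src t.dst) {r r' : V} (hr : InSC E t.src r) (hr' : InSC E t.dst r')
    (hsrc : ¬t.HeadAtSrc → r = t.src) (hdst : ¬t.HeadAtDst → r' = t.dst) :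
    Step.Valid (AcyE E) (AcyH E H) ⟨r, t.dir, r'⟩ := by
  obtain ⟨a, d, b⟩ := t
  have hrr' : ¬InSC E r r' := fun h => hout (hr.trans (h.trans hr'.symm))
  cases d with
  | fwd =>
    obtain rfl : r = a := hsrc (by simp [Step.HeadAtSrc])
    exact ⟨hrr', b, hr'.symm, ht⟩
  | bwd =>
    obtain rfl : r' = b := hdst (by simp [Step.HeadAtDst])
    exact ⟨fun h => hrr' h.symm, a, hr.symm, ht⟩
  | bi => exact ⟨fun h : r = r' => hrr' (h ▸ .refl r), pair_mem_acyH ht.2 hr hr'⟩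

theorem IsWalk.append {l₁ l₂ : List (Step V)} {x m y : V} (h₁ : IsWalk E H l₁ x m)
    (h₂ : IsWalk E H l₂ m y) : IsWalk E H (l₁ ++ l₂) x y := by
  induction l₁ generalizing x with
  | nil => exact (h₁ : x = m) ▸ h₂
  | cons s l ih => exact ⟨h₁.1, h₁.2.1, ih h₁.2.2⟩

theorem IsWalk.src_eq_of_mem_head? {l : List (Step V)} {x y : V} {f : Step V}
    (h : IsWalk E H l x y) (hf : f ∈ l.head?) : f.src = x := by
  obtain _ | ⟨s, l⟩ := l
  · cases hf
  · cases hf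
    exact h.1

theorem IsWalk.dst_eq_of_mem_getLast? {l : List (Step V)} {x y : V} {g : Step V}
    (h : IsWalk E H l x y) (hg : g ∈ l.getLast?) : g.dst = y := by
  induction l generalizing x with
  | nil => cases hg
  | cons s l ih =>
    obtain _ | ⟨t, l⟩ := l
    · cases hg
      exact h.2.2
    · exact ih h.2.2 (List.getLast?_cons_cons ▸ hg)

def SigmaJunctionOpen (E : V → V → Prop) (Z : Set V) (s t : Step V) : Prop :=
  ((s.HeadAtDst ∧ t.HeadAtSrc) → s.dst ∈ AncSet E Z) ∧
  (¬ (s.HeadAtDst ∧ t.HeadAtSrc) →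
      ¬ (s.dst ∈ Z ∧ ((¬ s.HeadAtDst ∧ ¬ InSC E s.dst s.src) ∨
                      (¬ t.HeadAtSrc ∧ ¬ InSC E s.dst t.dst))))

/-- `v`, entered through an arrowhead iff `arrowIn` and left along `t`, is d-open given `Z`. -/
def DOpenAt (E : V → V → Prop) (Z : Set V) (arrowIn : Prop) (v : V) (t : Step V) : Prop :=
  (arrowIn ∧ t.HeadAtSrc → v ∈ AncSet E Z) ∧ (¬(arrowIn ∧ t.HeadAtSrc) → v ∉ Z)

def DJunctionOpen (E : V → V → Prop) (Z : Set V) (s t : Step V) : Prop :=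
  DOpenAt E Z s.HeadAtDst s.dst t

theorem sigmaInteriorOpen_iff_isChain :
    ∀ {l : List (Step V)}, SigmaInteriorOpen E Z l ↔ l.IsChain (SigmaJunctionOpen E Z)
  | [] | [_] => by simp [SigmaInteriorOpen]
  | _ :: _ :: _ => by
    rw [List.isChain_cons_cons, ← sigmaInteriorOpen_iff_isChain]
    simp only [SigmaInteriorOpen, SigmaJunctionOpen, and_assoc]

theorem dInteriorOpen_iff_isChain :
    ∀ {l : List (Step V)}, DInteriorOpen E Z l ↔ l.IsChain (DJunctionOpen E Z)
  | [] | [_] => by simp [DInteriorOpen]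
  | _ :: _ :: _ => by
    rw [List.isChain_cons_cons, ← dInteriorOpen_iff_isChain]
    simp only [DInteriorOpen, DJunctionOpen, DOpenAt, and_assoc]

namespace SigmaJunctionOpen

variable {s t : Step V}

theorem mem_ancSet (h : SigmaJunctionOpen E Z s t) (hs : s.HeadAtDst) (ht : t.HeadAtSrc) :
    s.dst ∈ AncSet E Z :=
  h.1 ⟨hs, ht⟩

theorem not_mem_of_left (h : SigmaJunctionOpen E Z s t) (hs : ¬s.HeadAtDst)
    (hsc : ¬InSC E s.dst s.src) : s.dst ∉ Z :=
  fun hz => h.2 (fun hc => hs hc.1) ⟨hz, .inl ⟨hs, hsc⟩⟩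

theorem not_mem_of_right (h : SigmaJunctionOpen E Z s t) (ht : ¬t.HeadAtSrc)
    (hsc : ¬InSC E s.dst t.dst) : s.dst ∉ Z :=
  fun hz => h.2 (fun hc => ht hc.2) ⟨hz, .inr ⟨ht, hsc⟩⟩

theorem of_not_collider (hcol : ¬(s.HeadAtDst ∧ t.HeadAtSrc))
    (hs : ¬s.HeadAtDst → InSC E s.dst s.src) (ht : ¬t.HeadAtSrc → InSC E s.dst t.dst) :
    SigmaJunctionOpen E Z s t := by
  refine ⟨fun h => (hcol h).elim, fun _ ⟨_, h⟩ => ?_⟩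
  rcases h with ⟨h, hsc⟩ | ⟨h, hsc⟩
  exacts [hsc (hs h), hsc (ht h)]

end SigmaJunctionOpen

theorem exists_fwd_walk_of_inSC {a b : V} (h : InSC E a b) :
    ∃ w, IsWalk E H w a b ∧ ∀ st ∈ w, st.dir = .fwd ∧ InSC E a st.src ∧ InSC E a st.dst := by
  obtain ⟨hab, hba⟩ := h
  induction hab using Relation.ReflTransGen.head_induction_on with
  | refl => exact ⟨[], rfl, by simp⟩
  | @head a c hac hcb ih =>
    have hac' : InSC E a c := ⟨.single hac, hcb.trans hba⟩
    obtain ⟨w, hw, hst⟩ := ih (hba.tail hac)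
    refine ⟨⟨a, .fwd, c⟩ :: w, ⟨rfl, hac, hw⟩, ?_⟩
    rintro st (_ | ⟨_, hst'⟩)
    · exact ⟨rfl, .refl a, hac'⟩
    · obtain ⟨hd, hs, hd'⟩ := hst st hst'
      exact ⟨hd, hac'.trans hs, hac'.trans hd'⟩

theorem exists_bwd_walk_of_inSC {a b : V} (h : InSC E a b) :
    ∃ w, IsWalk E H w a b ∧ ∀ st ∈ w, st.dir = .bwd ∧ InSC E a st.src ∧ InSC E a st.dst := by
  obtain ⟨hab, hba⟩ := h
  revert hab
  induction hba with
  | refl => exact fun _ => ⟨[], rfl, by simp⟩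
  | @tail c a hbc hca ih =>
    intro hab
    have hac : InSC E a c := ⟨hab.trans hbc, .single hca⟩
    obtain ⟨w, hw, hst⟩ := ih (hab.head hca)
    refine ⟨⟨a, .bwd, c⟩ :: w, ⟨rfl, hca, hw⟩, ?_⟩
    rintro st (_ | ⟨_, hst'⟩)
    · exact ⟨rfl, .refl a, hac⟩
    · obtain ⟨hd, hs, hd'⟩ := hst st hst'
      exact ⟨hd, hac.trans hs, hac.trans hd'⟩

theorem isChain_sigmaJunctionOpen_of_dir_eq {a : V} {d : EDir} (hd : d ≠ .bi)
    {w : List (Step V)} (h : ∀ st ∈ w, st.dir = d ∧ InSC E a st.src ∧ InSC E a st.dst) :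
    w.IsChain (SigmaJunctionOpen E Z) := by
  refine (List.pairwise_of_forall_mem_list fun s hs t ht => ?_).isChain
  obtain ⟨hsd, hss, hsd'⟩ := h s hs
  obtain ⟨htd, -, htd'⟩ := h t ht
  refine .of_not_collider ?_ (fun _ => hsd'.symm.trans hss) (fun _ => hsd'.symm.trans htd')
  cases d <;> simp_all [Step.HeadAtDst, Step.HeadAtSrc]

theorem exists_sigmaOpen_walk_of_acyE {x y : V} (h : AcyE E x y) :
    ∃ w ≠ [], IsWalk E H w x y ∧ w.IsChain (SigmaJunctionOpen E Z) ∧ ∀ st ∈ w, st.dir = .fwd := by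
  obtain ⟨-, w', hyw', hxw'⟩ := h
  obtain ⟨w, hw, hst⟩ := exists_fwd_walk_of_inSC (H := H) hyw'.symm
  refine ⟨⟨x, .fwd, w'⟩ :: w, List.cons_ne_nil _ _, ⟨rfl, hxw', hw⟩, ?_, ?_⟩
  · refine (isChain_sigmaJunctionOpen_of_dir_eq (by simp) hst).cons fun f hf => ?_
    obtain ⟨hfd, -, hfd'⟩ := hst f (List.mem_of_mem_head? hf)
    exact .of_not_collider (by simp [Step.HeadAtSrc, hfd]) (by simp [Step.HeadAtDst])
      (fun _ => hfd')
  · rintro st (_ | ⟨_, hst'⟩)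
    exacts [rfl, (hst st hst').1]

theorem exists_sigmaOpen_walk_of_acyE_symm {x y : V} (h : AcyE E y x) :
    ∃ w ≠ [], IsWalk E H w x y ∧ w.IsChain (SigmaJunctionOpen E Z) ∧ ∀ st ∈ w, st.dir = .bwd := by
  obtain ⟨-, w', hxw', hyw'⟩ := h
  obtain ⟨w, hw, hst⟩ := exists_bwd_walk_of_inSC (H := H) hxw'
  refine ⟨w ++ [⟨w', .bwd, y⟩], by simp, hw.append (l₂ := [⟨w', .bwd, y⟩]) ⟨rfl, hyw', rfl⟩, ?_, ?_⟩
  · refine (isChain_sigmaJunctionOpen_of_dir_eq (by simp) hst).append (.singleton _) ?_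
    rintro g hg _ ⟨⟩
    obtain ⟨hgd, hgs, hgd'⟩ := hst g (List.mem_of_mem_getLast? hg)
    exact .of_not_collider (by simp [Step.HeadAtDst, hgd]) (fun _ => hgd'.symm.trans hgs)
      (by simp [Step.HeadAtSrc])
  · simp only [List.mem_append, List.mem_singleton]
    rintro st (hst' | rfl)
    exacts [(hst st hst').1, rfl]

theorem exists_sigmaOpen_walk_of_mem_acyH (hH : ∀ F ∈ H, ∀ F' : Set V, F' ⊆ F → F' ∈ H)
    {x y : V} (hxy : x ≠ y) (h : ({x, y} : Set V) ∈ AcyH E H) :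
    ∃ w ≠ [], IsWalk E H w x y ∧ w.IsChain (SigmaJunctionOpen E Z) ∧
      ∀ st ∈ w, st.dir = .bi ∨ InSC E st.src st.dst := by
  obtain ⟨p, q, hpx, hqy, hpq⟩ := exists_pair_of_pair_mem_acyH hH h
  obtain ⟨wx, hwx, hstx⟩ := exists_bwd_walk_of_inSC (H := H) hpx.symm
  obtain ⟨wy, hwy, hsty⟩ := exists_fwd_walk_of_inSC (H := H) hqy
  have hcx := isChain_sigmaJunctionOpen_of_dir_eq (Z := Z) (by simp) hstx
  have hcy := isChain_sigmaJunctionOpen_of_dir_eq (Z := Z) (by simp) hsty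
  have hlocal : ∀ st ∈ wx ++ wy, InSC E st.src st.dst := by
    simp only [List.mem_append]
    rintro st (hst | hst)
    · exact (hstx st hst).2.1.symm.trans (hstx st hst).2.2
    · exact (hsty st hst).2.1.symm.trans (hsty st hst).2.2
  have hjx : ∀ g ∈ wx.getLast?, ∀ f : Step V, (¬f.HeadAtSrc → InSC E g.dst f.dst) →
      SigmaJunctionOpen E Z g f := by
    intro g hg f hf
    obtain ⟨hgd, hgs, hgd'⟩ := hstx g (List.mem_of_mem_getLast? hg)
    exact .of_not_collider (by simp [Step.HeadAtDst, hgd]) (fun _ => hgd'.symm.trans hgs) hf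
  by_cases hpq' : p = q
  · subst hpq'
    refine ⟨wx ++ wy, ?_, hwx.append hwy, hcx.append hcy fun g hg f hf => hjx g hg f fun _ => ?_,
      fun st hst => .inr (hlocal st hst)⟩
    · rintro hnil
      rw [List.append_eq_nil_iff] at hnil
      obtain ⟨rfl, rfl⟩ := hnil
      exact hxy ((hwx : x = p).trans hwy)
    · obtain ⟨-, -, hgd'⟩ := hstx g (List.mem_of_mem_getLast? hg)
      exact hgd'.symm.trans (hpx.symm.trans (hsty f (List.mem_of_mem_head? hf)).2.2)
  · refine ⟨wx ++ ⟨p, .bi, q⟩ :: wy, by simp, hwx.append ⟨rfl, ⟨hpq', hpq⟩, hwy⟩,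
      hcx.append (hcy.cons fun f hf => ?_) fun g hg f hf => hjx g hg f ?_, ?_⟩
    · obtain ⟨hfd, -, hfd'⟩ := hsty f (List.mem_of_mem_head? hf)
      exact .of_not_collider (by simp [Step.HeadAtSrc, hfd]) (by simp [Step.HeadAtDst])
        (fun _ => hfd')
    · obtain ⟨⟩ := hf
      simp [Step.HeadAtSrc]
    · simp only [List.mem_append, List.mem_cons]
      rintro st (hst | rfl | hst)
      exacts [.inr (hlocal st (List.mem_append_left _ hst)), .inl rfl,
        .inr (hlocal st (List.mem_append_right _ hst))]

/-- The kind of step that may occur in the `G`-walk replacing the step `s` of `G^acy`. -/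
def Step.Imitates (E : V → V → Prop) (st s : Step V) : Prop :=
  st.dir = s.dir ∨ (s.dir = .bi ∧ InSC E st.src st.dst)

theorem Step.Imitates.headAtSrc {st s : Step V} (h : st.Imitates E s) (hst : st.HeadAtSrc) :
    s.HeadAtSrc := by
  rcases h with h | ⟨h, -⟩
  · rwa [Step.HeadAtSrc, ← h]
  · exact .inr h

theorem Step.Imitates.headAtDst {st s : Step V} (h : st.Imitates E s) (hst : st.HeadAtDst) :
    s.HeadAtDst := by
  rcases h with h | ⟨h, -⟩
  · rwa [Step.HeadAtDst, ← h]
  · exact .inr h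

theorem exists_sigmaOpen_walk_of_valid_acy (hH : ∀ F ∈ H, ∀ F' : Set V, F' ⊆ F → F' ∈ H)
    {s : Step V} (hs : s.Valid (AcyE E) (AcyH E H)) :
    ∃ w ≠ [], IsWalk E H w s.src s.dst ∧ w.IsChain (SigmaJunctionOpen E Z) ∧
      ∀ st ∈ w, st.Imitates E s := by
  obtain ⟨x, _ | _ | _, y⟩ := s
  · obtain ⟨w, hne, hw, hc, hst⟩ := exists_sigmaOpen_walk_of_acyE hs
    exact ⟨w, hne, hw, hc, fun st h => .inl (hst st h)⟩
  · obtain ⟨w, hne, hw, hc, hst⟩ := exists_sigmaOpen_walk_of_acyE_symm hs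
    exact ⟨w, hne, hw, hc, fun st h => .inl (hst st h)⟩
  · obtain ⟨w, hne, hw, hc, hst⟩ := exists_sigmaOpen_walk_of_mem_acyH hH hs.1 hs.2
    exact ⟨w, hne, hw, hc, fun st h => (hst st h).imp id (⟨rfl, ·⟩)⟩

/-- A tail of `g` or `f` that is not a tail of `s` or `t` lies inside a strongly connected
component, so it cannot block the junction. -/
theorem SigmaJunctionOpen.of_imitates {s t g f : Step V}
    (hst : DJunctionOpen (AcyE E) Z s t) (hg : g.Imitates E s) (hf : f.Imitates E t)
    (hgd : g.dst = s.dst) (hfs : f.src = s.dst) : SigmaJunctionOpen E Z g f := by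
  refine ⟨fun h => hgd ▸ ancSet_acyE_subset (hst.1 ⟨hg.headAtDst h.1, hf.headAtSrc h.2⟩), ?_⟩
  rintro - ⟨hz, ⟨hgt, hgsc⟩ | ⟨hft, hfsc⟩⟩
  · rcases hg with hdir | ⟨-, hsc⟩
    · exact hst.2 (fun h => hgt (by rw [Step.HeadAtDst, hdir]; exact h.1)) (hgd ▸ hz)
    · exact hgsc hsc.symm
  · rcases hf with hdir | ⟨-, hsc⟩
    · exact hst.2 (fun h => hft (by rw [Step.HeadAtSrc, hdir]; exact h.2)) (hgd ▸ hz)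
    · exact hfsc (hgd ▸ hfs ▸ hsc)

theorem exists_sigmaOpen_walk_of_dOpen_acy (hH : ∀ F ∈ H, ∀ F' : Set V, F' ⊆ F → F' ∈ H)
    {y : V} : ∀ {l : List (Step V)} {u : V}, IsWalk (AcyE E) (AcyH E H) l u y →
      l.IsChain (DJunctionOpen (AcyE E) Z) →
      ∃ w, IsWalk E H w u y ∧ w.IsChain (SigmaJunctionOpen E Z) ∧
        ∀ f ∈ w.head?, ∃ s ∈ l.head?, f.Imitates E s
  | [], _, hw, _ => ⟨[], hw, .nil, by simp⟩
  | s :: l, _, ⟨rfl, hs, hw⟩, hc => by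
    rw [List.isChain_cons] at hc
    obtain ⟨ws, hne, hws, hcs, hims⟩ := exists_sigmaOpen_walk_of_valid_acy (Z := Z) hH hs
    obtain ⟨wl, hwl, hcl, himl⟩ := exists_sigmaOpen_walk_of_dOpen_acy hH hw hc.2
    refine ⟨ws ++ wl, hws.append hwl, hcs.append hcl fun g hg f hf => ?_, ?_⟩
    · obtain ⟨t, ht, hft⟩ := himl f hf
      exact .of_imitates (hc.1 t ht) (hims g (List.mem_of_mem_getLast? hg)) hft
        (hws.dst_eq_of_mem_getLast? hg) (hwl.src_eq_of_mem_head? hf)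
    · rw [List.head?_append_of_ne_nil _ hne]
      exact fun f hf => ⟨s, rfl, hims f (List.mem_of_mem_head? hf)⟩

theorem exists_dOpen_acy_walk_of_inSC {p u y : V} {l : List (Step V)} {arrowIn : Prop}
    (hin : ¬arrowIn) (hu₁ : ({u} : Set V) ∈ H) (hp : p ∉ Z) (hu : u ∉ Z) (hup : InSC E u p)
    (hw : IsWalk (AcyE E) (AcyH E H) l u y) (hc : l.IsChain (DJunctionOpen (AcyE E) Z))
    (htail : ∀ f ∈ l.head?, ¬f.HeadAtSrc) :
    ∃ l', IsWalk (AcyE E) (AcyH E H) l' p y ∧ l'.IsChain (DJunctionOpen (AcyE E) Z) ∧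
      ∀ f ∈ l'.head?, DOpenAt (AcyE E) Z arrowIn p f := by
  by_cases hpu : p = u
  · subst hpu
    exact ⟨l, hw, hc, fun _ _ => ⟨fun h => (hin h.1).elim, fun _ => hp⟩⟩
  · have hpair : ({p, u} : Set V) ∈ AcyH E H :=
      pair_mem_acyH (by rwa [Set.pair_eq_singleton]) hup (.refl u)
    refine ⟨⟨p, .bi, u⟩ :: l, ⟨rfl, ⟨hpu, hpair⟩, hw⟩,
      hc.cons fun f hf => ⟨fun h => (htail f hf h.2).elim, fun _ => hu⟩, ?_⟩
    rintro _ ⟨⟩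
    exact ⟨fun h => (hin h.1).elim, fun _ => hp⟩

theorem exists_dOpen_acy_walk_cons_of_not_inSC (hsing : ∀ v, ({v} : Set V) ∈ H) {head : Prop}
    {t : Step V} {p r₂ y : V} {l₂ : List (Step V)} (ht : t.Valid E H)
    (hout : ¬InSC E t.src t.dst) (hleave : ¬t.HeadAtSrc → t.src ∉ Z)
    (hcoll : head → t.HeadAtSrc → t.src ∈ AncSet E Z) (hfix : ¬head → InSC E t.src p ∧ p ∉ Z)
    (hr₂ : InSC E t.dst r₂) (hr₂fix : ¬t.HeadAtDst → r₂ = t.dst)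
    (hw₂ : IsWalk (AcyE E) (AcyH E H) l₂ r₂ y) (hc₂ : l₂.IsChain (DJunctionOpen (AcyE E) Z))
    (hh₂ : ∀ f ∈ l₂.head?, DOpenAt (AcyE E) Z t.HeadAtDst r₂ f) :
    ∃ r l, InSC E t.src r ∧ (¬head → r = p) ∧ IsWalk (AcyE E) (AcyH E H) l r y ∧
      l.IsChain (DJunctionOpen (AcyE E) Z) ∧ ∀ f ∈ l.head?, DOpenAt (AcyE E) Z head r f := by
  have hcons : ∀ r, InSC E t.src r → (¬t.HeadAtSrc → r = t.src) →
      IsWalk (AcyE E) (AcyH E H) (⟨r, t.dir, r₂⟩ :: l₂) r y ∧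
        (⟨r, t.dir, r₂⟩ :: l₂).IsChain (DJunctionOpen (AcyE E) Z) :=
    fun r hr hrsrc => ⟨⟨rfl, ht.acyE_of_not_inSC hout hr hr₂ hrsrc hr₂fix, hw₂⟩, hc₂.cons hh₂⟩
  by_cases hts : t.HeadAtSrc
  · -- the component of `t.src` is a collider, or is entered through a tail at `p`
    obtain ⟨r, hr, hrp, hrZ⟩ : ∃ r, InSC E t.src r ∧ (¬head → r = p) ∧
        DOpenAt (AcyE E) Z head r ⟨r, t.dir, r₂⟩ := by
      by_cases hh : head
      · obtain ⟨r, hr, hra⟩ := exists_inSC_mem_ancSet_acyE (hcoll hh hts)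
        exact ⟨r, hr, fun h => (h hh).elim, fun _ => hra, fun h => (h ⟨hh, hts⟩).elim⟩
      · exact ⟨p, (hfix hh).1, fun _ => rfl, fun h => (hh h.1).elim, fun _ => (hfix hh).2⟩
    obtain ⟨hw, hc⟩ := hcons r hr fun h => (h hts).elim
    exact ⟨r, _, hr, hrp, hw, hc, by rintro _ ⟨⟩; exact hrZ⟩
  · obtain ⟨hw, hc⟩ := hcons t.src (.refl _) fun _ => rfl
    have hu := hleave hts
    by_cases hh : head
    · exact ⟨t.src, _, .refl _, fun h => (h hh).elim, hw, hc,
        by rintro _ ⟨⟩; exact ⟨fun h => (hts h.2).elim, fun _ => hu⟩⟩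
    · obtain ⟨hup, hp⟩ := hfix hh
      obtain ⟨l, hw', hc', hh'⟩ := exists_dOpen_acy_walk_of_inSC hh (hsing _) hp hu hup hw hc
        (by rintro _ ⟨⟩; exact hts)
      exact ⟨p, l, hup, fun _ => rfl, hw', hc', hh'⟩

/-- `head` says that the walk is entered at `u` through an arrowhead; otherwise it is entered
through a tail, and its compression has to start at the node `p` where that tail sits. -/
theorem exists_dOpen_acy_walk (hsing : ∀ v, ({v} : Set V) ∈ H) {y : V} (hy : y ∉ Z)
    (l : List (Step V)) (head : Prop) (u p : V) (hw : IsWalk E H l u y)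
    (hc : l.IsChain (SigmaJunctionOpen E Z))
    (hleave : ∀ t ∈ l.head?, ¬t.HeadAtSrc → ¬InSC E u t.dst → u ∉ Z)
    (hcoll : head → ∀ t ∈ l.head?, t.HeadAtSrc → u ∈ AncSet E Z)
    (hfix : ¬head → InSC E u p ∧ p ∉ Z) :
    ∃ r l', InSC E u r ∧ (¬head → r = p) ∧ IsWalk (AcyE E) (AcyH E H) l' r y ∧
      l'.IsChain (DJunctionOpen (AcyE E) Z) ∧ ∀ f ∈ l'.head?, DOpenAt (AcyE E) Z head r f := by
  induction l generalizing head u p with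
  | nil =>
    obtain rfl : u = y := hw
    by_cases hh : head
    · exact ⟨u, [], .refl u, fun h => (h hh).elim, rfl, .nil, by simp⟩
    · obtain ⟨hup, hp⟩ := hfix hh
      obtain ⟨l, hw', hc', hh'⟩ :=
        exists_dOpen_acy_walk_of_inSC (l := []) hh (hsing u) hp hy hup rfl .nil (by simp)
      exact ⟨p, l, hup, fun _ => rfl, hw', hc', hh'⟩
  | cons t l ih =>
    obtain ⟨rfl, ht, hw⟩ := hw
    rw [List.isChain_cons] at hc
    obtain ⟨hjunc, hc⟩ := hc
    have hleave' : ∀ t' ∈ l.head?, ¬t'.HeadAtSrc → ¬InSC E t.dst t'.dst → t.dst ∉ Z :=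
      fun t' ht' => (hjunc t' ht').not_mem_of_right
    by_cases hin : InSC E t.src t.dst
    · have hcoll' : head → ∀ t' ∈ l.head?, t'.HeadAtSrc → t.dst ∈ AncSet E Z := by
        intro hh t' ht' hts'
        by_cases htd : t.HeadAtDst
        · exact (hjunc t' ht').mem_ancSet htd hts'
        · exact mem_ancSet_of_inSC hin (hcoll hh t rfl (Step.headAtSrc_of_not_headAtDst htd))
      obtain ⟨r, l', hr, hrp, hw', hc', hh'⟩ := ih head t.dst p hw hc hleave' hcoll'
        fun hh => ⟨hin.symm.trans (hfix hh).1, (hfix hh).2⟩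
      exact ⟨r, l', hin.trans hr, hrp, hw', hc', hh'⟩
    · have hv : ¬t.HeadAtDst → t.dst ∉ Z := by
        intro htd
        rcases l with _ | ⟨t', l⟩
        · exact (hw : t.dst = y) ▸ hy
        · exact (hjunc t' rfl).not_mem_of_left htd fun h => hin h.symm
      obtain ⟨r₂, l₂, hr₂, hr₂fix, hw₂, hc₂, hh₂⟩ := ih t.HeadAtDst t.dst t.dst hw hc hleave'
        (fun htd t' ht' => (hjunc t' ht').mem_ancSet htd) fun htd => ⟨.refl _, hv htd⟩
      exact exists_dOpen_acy_walk_cons_of_not_inSC hsing ht hin (hleave t rfl · hin)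
        (fun hh => hcoll hh t rfl) hfix hr₂ hr₂fix hw₂ hc₂ hh₂

end Acyclification

theorem sigmaSep_iff_dSep_acyclification_general {V : Type*}
    (E : V → V → Prop) (H : Set (Set V)) (hH : IsSimplicial H) (X Y Z : Set V) :
    SigmaSep E H X Y Z ↔ DSep (AcyE E) (AcyH E H) X Y Z := by
  constructor
  · intro hσ x hx y hy l hw ⟨hxZ, hyZ, hopen⟩
    obtain ⟨w, hw', hc, -⟩ :=
      exists_sigmaOpen_walk_of_dOpen_acy hH.2 hw (dInteriorOpen_iff_isChain.1 hopen)
    exact hσ x hx y hy w hw' ⟨hxZ, hyZ, sigmaInteriorOpen_iff_isChain.2 hc⟩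
  · intro hd x hx y hy l hw ⟨hxZ, hyZ, hopen⟩
    -- the start `x` is treated as entered through a tail, so it stays the start
    obtain ⟨r, l', -, hrx, hw', hc, -⟩ := exists_dOpen_acy_walk hH.1 hyZ l False x x hw
      (sigmaInteriorOpen_iff_isChain.1 hopen) (fun _ _ _ _ => hxZ) False.elim
      fun _ => ⟨.refl x, hxZ⟩
    obtain rfl := hrx not_false
    exact hd r hx y hy l' hw' ⟨hxZ, hyZ, dInteriorOpen_iff_isChain.2 hc⟩

/-- σ-separation in a HEDG `G` is equivalent to d-separation in its
acyclification `G^acy`. -/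
theorem sigmaSep_iff_dSep_acyclification {V : Type*} [Fintype V]
    (E : V → V → Prop) (H : Set (Set V)) (hH : IsSimplicial H) (X Y Z : Set V) :
    SigmaSep E H X Y Z ↔ DSep (AcyE E) (AcyH E H) X Y Z :=
  sigmaSep_iff_dSep_acyclification_general E H hH X Y Z

end HedgPaper
end

section
/- Conditional independence of random variables with a strictly positive joint density satisfies the intersection property: if X,Y,Z,W are pairwise disjoint sets of coordinates of a probability distribution P on a product of standard Borel spaces that admits a strictly positive density with respect to a product measure, then (X ⟂_P Y | W∪Z) and (X ⟂_P W | Y∪Z) together imply X ⟂_P Y∪W | Z. -/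
/-!
Fix an event `A` in the `X` coordinates. By `h1` and `h2`, `P(A | Y ∪ W ∪ Z)` agrees `P`-a.e.
both with a `σ(W ∪ Z)`-measurable and with a `σ(Y ∪ Z)`-measurable function. Because the density
is positive, `P` has the same null sets as a product probability measure `Q`, under which the
coordinates in `W` are independent of those in `Y ∪ Z`; a function that is `Q`-a.e. both
`σ(W ∪ Z)`- and `σ(Y ∪ Z)`-measurable is therefore `Q`-a.e. equal to its `Q`-conditional
expectation given `σ(Z)`. So `P(A | Y ∪ W ∪ Z)` is a.e. `σ(Z)`-measurable, and conditioning it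
further on `σ(Z)` yields the product rule for `A` and any event in the `Y ∪ W` coordinates.
-/

open MeasureTheory ProbabilityTheory

section CondExp

variable {Ω : Type*} {m₁ m₂ m₃ m₀ : MeasurableSpace Ω} {μ : Measure Ω}

lemma generateFrom_image2_inter (m₁ m₂ : MeasurableSpace Ω) :
    MeasurableSpace.generateFrom
      (Set.image2 (· ∩ ·) {s | MeasurableSet[m₁] s} {t | MeasurableSet[m₂] t}) = m₁ ⊔ m₂ := by
  refine le_antisymm (MeasurableSpace.generateFrom_le ?_) (sup_le (fun s hs ↦ ?_) fun t ht ↦ ?_)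
  · rintro _ ⟨s, hs, t, ht, rfl⟩
    exact (le_sup_left (b := m₂) s hs).inter (le_sup_right (a := m₁) t ht)
  · exact .basic _ ⟨s, hs, Set.univ, .univ, Set.inter_univ s⟩
  · exact .basic _ ⟨Set.univ, .univ, t, ht, Set.univ_inter t⟩

lemma isPiSystem_image2_inter (m₁ m₂ : MeasurableSpace Ω) :
    IsPiSystem (Set.image2 (· ∩ ·) {s | MeasurableSet[m₁] s} {t | MeasurableSet[m₂] t}) := by
  rintro _ ⟨s, hs, t, ht, rfl⟩ _ ⟨s', hs', t', ht', rfl⟩ -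
  exact ⟨s ∩ s', hs.inter hs', t ∩ t', ht.inter ht', Set.inter_inter_inter_comm s s' t t'⟩

lemma setIntegral_eq_of_forall_inter (hm₁ : m₁ ≤ m₀) (hm₂ : m₂ ≤ m₀) {f g : Ω → ℝ}
    (hf : Integrable f μ) (hg : Integrable g μ)
    (h : ∀ s t, MeasurableSet[m₁] s → MeasurableSet[m₂] t →
      ∫ x in s ∩ t, f x ∂μ = ∫ x in s ∩ t, g x ∂μ)
    {u : Set Ω} (hu : MeasurableSet[m₁ ⊔ m₂] u) :
    ∫ x in u, f x ∂μ = ∫ x in u, g x ∂μ := by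
  have hm : m₁ ⊔ m₂ ≤ m₀ := sup_le hm₁ hm₂
  have huniv : ∫ x, f x ∂μ = ∫ x, g x ∂μ := by
    simpa using h Set.univ Set.univ .univ .univ
  induction u, hu using MeasurableSpace.induction_on_inter
    (generateFrom_image2_inter m₁ m₂).symm (isPiSystem_image2_inter m₁ m₂) with
  | empty => simp
  | basic u hu =>
    obtain ⟨s, hs, t, ht, rfl⟩ := hu
    exact h s t hs ht
  | compl u hu ihu =>
    rw [setIntegral_compl (hm u hu) hf, setIntegral_compl (hm u hu) hg, ihu, huniv]
  | iUnion u hd hu ihu =>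
    rw [integral_iUnion (fun i ↦ hm _ (hu i)) hd hf.integrableOn,
      integral_iUnion (fun i ↦ hm _ (hu i)) hd hg.integrableOn]
    simp_rw [ihu]

lemma ae_eq_condExp_sup_of_setIntegral_inter [IsFiniteMeasure μ] (hm₁ : m₁ ≤ m₀)
    (hm₂ : m₂ ≤ m₀) {f g : Ω → ℝ} (hf : Integrable f μ) (hg : Integrable g μ)
    (hgm : StronglyMeasurable[m₁ ⊔ m₂] g)
    (h : ∀ s t, MeasurableSet[m₁] s → MeasurableSet[m₂] t →
      ∫ x in s ∩ t, g x ∂μ = ∫ x in s ∩ t, f x ∂μ) :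
    g =ᵐ[μ] μ[f | m₁ ⊔ m₂] :=
  ae_eq_condExp_of_forall_setIntegral_eq (sup_le hm₁ hm₂) hf (fun _ _ _ ↦ hg.integrableOn)
    (fun _ hu _ ↦ setIntegral_eq_of_forall_inter hm₁ hm₂ hg hf h hu) hgm.aestronglyMeasurable

lemma condExp_indicator_sup_ae_eq [IsFiniteMeasure μ] (hm₁ : m₁ ≤ m₀) (hm₂ : m₂ ≤ m₀)
    {A : Set Ω} (hA : MeasurableSet A)
    (h : ∀ B, MeasurableSet[m₁] B → μ⟦A ∩ B | m₂⟧ =ᵐ[μ] fun ω ↦ (μ⟦A | m₂⟧) ω * (μ⟦B | m₂⟧) ω) :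
    μ⟦A | m₁ ⊔ m₂⟧ =ᵐ[μ] μ⟦A | m₂⟧ := by
  set c := μ⟦A | m₂⟧
  refine (ae_eq_condExp_sup_of_setIntegral_inter hm₁ hm₂ ((integrable_const 1).indicator hA)
    integrable_condExp (stronglyMeasurable_condExp.mono le_sup_right) fun s t hs ht ↦ ?_).symm
  have hs₀ := hm₁ s hs
  have hcs : s.indicator c = c * s.indicator 1 := by
    ext ω; by_cases hω : ω ∈ s <;> simp [hω]
  calc ∫ ω in s ∩ t, c ω ∂μ
      = ∫ ω in t, (c * s.indicator 1 : Ω → ℝ) ω ∂μ := by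
        rw [← hcs, setIntegral_indicator hs₀, Set.inter_comm]
    _ = ∫ ω in t, c ω * (μ⟦s | m₂⟧) ω ∂μ := by
        rw [← setIntegral_condExp hm₂ (hcs ▸ integrable_condExp.indicator hs₀) ht]
        exact setIntegral_congr_ae (hm₂ t ht) <| (condExp_mul_of_stronglyMeasurable_left
          stronglyMeasurable_condExp (hcs ▸ integrable_condExp.indicator hs₀)
          ((integrable_const 1).indicator hs₀)).mono fun ω hω _ ↦ hω
    _ = ∫ ω in t, (μ⟦A ∩ s | m₂⟧) ω ∂μ :=
        setIntegral_congr_ae (hm₂ t ht) <| (h s hs).mono fun ω hω _ ↦ hω.symm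
    _ = ∫ ω in s ∩ t, A.indicator (fun _ ↦ (1 : ℝ)) ω ∂μ := by
        rw [setIntegral_condExp hm₂ ((integrable_const 1).indicator (hA.inter hs₀)) ht,
          setIntegral_indicator hA, setIntegral_indicator (hA.inter hs₀), Set.inter_comm t,
          Set.inter_comm A, Set.inter_right_comm s t]

lemma setIntegral_inter_eq_mul_of_indep [IsFiniteMeasure μ] (hm₁ : m₁ ≤ m₀)
    (hm₂ : m₂ ≤ m₀) (hind : Indep m₂ m₁ μ) {F : Ω → ℝ} (hF : StronglyMeasurable[m₁] F)
    (hFi : Integrable F μ) {s t : Set Ω} (hs : MeasurableSet[m₂] s) (ht : MeasurableSet[m₁] t) :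
    ∫ ω in s ∩ t, F ω ∂μ = μ.real s * ∫ ω in t, F ω ∂μ := by
  have hFt : Integrable (t.indicator F) μ := hFi.indicator (hm₁ t ht)
  calc ∫ ω in s ∩ t, F ω ∂μ
      = ∫ ω in s, (μ[t.indicator F | m₂]) ω ∂μ := by
        rw [setIntegral_condExp hm₂ hFt hs, setIntegral_indicator (hm₁ t ht)]
    _ = ∫ ω in s, (∫ ω', t.indicator F ω' ∂μ) ∂μ :=
        setIntegral_congr_ae (hm₂ s hs) <| (condExp_indep_eq hm₁ hm₂
          (hF.indicator ht) hind.symm).mono fun ω hω _ ↦ hω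
    _ = μ.real s * ∫ ω in t, F ω ∂μ := by
        rw [setIntegral_const, integral_indicator (hm₁ t ht), smul_eq_mul]

lemma condExp_sup_ae_eq_of_indep [IsFiniteMeasure μ] (hm₁ : m₁ ≤ m₀) (hm₂ : m₂ ≤ m₀)
    (hm₃ : m₃ ≤ m₀) (hind : Indep m₂ (m₁ ⊔ m₃) μ) {g : Ω → ℝ}
    (hg : StronglyMeasurable[m₁ ⊔ m₃] g) (hgi : Integrable g μ) :
    μ[g | m₂ ⊔ m₃] =ᵐ[μ] μ[g | m₃] := by
  have hm₁₃ : m₁ ⊔ m₃ ≤ m₀ := sup_le hm₁ hm₃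
  refine (ae_eq_condExp_sup_of_setIntegral_inter hm₂ hm₃ hgi integrable_condExp
    (stronglyMeasurable_condExp.mono le_sup_right) fun s t hs ht ↦ ?_).symm
  have ht' : MeasurableSet[m₁ ⊔ m₃] t := le_sup_right (a := m₁) t ht
  rw [setIntegral_inter_eq_mul_of_indep hm₁₃ hm₂ hind
      (stronglyMeasurable_condExp.mono le_sup_right) integrable_condExp hs ht',
    setIntegral_inter_eq_mul_of_indep hm₁₃ hm₂ hind hg hgi hs ht',
    setIntegral_condExp hm₃ hgi ht]

lemma ae_eq_condExp_of_ae_eq_of_indep [IsFiniteMeasure μ] (hm₁ : m₁ ≤ m₀)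
    (hm₂ : m₂ ≤ m₀) (hm₃ : m₃ ≤ m₀) (hind : Indep m₂ (m₁ ⊔ m₃) μ) {g h : Ω → ℝ}
    (hg : StronglyMeasurable[m₁ ⊔ m₃] g) (hgi : Integrable g μ)
    (hh : StronglyMeasurable[m₂ ⊔ m₃] h) (hgh : h =ᵐ[μ] g) :
    h =ᵐ[μ] μ[g | m₃] := by
  rw [← condExp_of_stronglyMeasurable (sup_le hm₂ hm₃) hh (hgi.congr hgh.symm)]
  exact (condExp_congr_ae hgh).trans (condExp_sup_ae_eq_of_indep hm₁ hm₂ hm₃ hind hg hgi)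

lemma condExp_indicator_inter_ae_eq_mul [IsFiniteMeasure μ]
    (hm₁₂ : m₁ ≤ m₂) (hm₂ : m₂ ≤ m₀) {A B : Set Ω} (hA : MeasurableSet A)
    (hB : MeasurableSet[m₂] B) {c : Ω → ℝ} (hc : StronglyMeasurable[m₁] c)
    (hAc : μ⟦A | m₂⟧ =ᵐ[μ] c) :
    μ⟦A ∩ B | m₁⟧ =ᵐ[μ] fun ω ↦ (μ⟦A | m₁⟧) ω * (μ⟦B | m₁⟧) ω := by
  have hB₀ := hm₂ B hB
  have hci : Integrable c μ := integrable_condExp.congr hAc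
  have hcA : μ⟦A | m₁⟧ =ᵐ[μ] c := by
    refine (condExp_condExp_of_le hm₁₂ hm₂).symm.trans ((condExp_congr_ae hAc).trans ?_)
    rw [condExp_of_stronglyMeasurable (hm₁₂.trans hm₂) hc hci]
  have hcB : B.indicator c = c * B.indicator 1 := by
    ext ω; by_cases hω : ω ∈ B <;> simp [hω]
  have hAB : (A ∩ B).indicator (fun _ ↦ (1 : ℝ)) = B.indicator (A.indicator fun _ ↦ 1) := by
    rw [Set.indicator_indicator, Set.inter_comm]
  calc μ⟦A ∩ B | m₁⟧
      =ᵐ[μ] μ[μ[B.indicator (A.indicator fun _ ↦ 1) | m₂] | m₁] := by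
        rw [hAB]; exact (condExp_condExp_of_le hm₁₂ hm₂).symm
    _ =ᵐ[μ] μ[c * B.indicator 1 | m₁] := by
        refine condExp_congr_ae <|
          (condExp_indicator ((integrable_const (1 : ℝ)).indicator hA) hB).trans ?_
        rw [← hcB]
        exact hAc.mono fun ω hω ↦ by by_cases hωB : ω ∈ B <;> simp [hωB, hω]
    _ =ᵐ[μ] c * μ⟦B | m₁⟧ :=
        condExp_mul_of_stronglyMeasurable_left hc (hcB ▸ hci.indicator hB₀)
          ((integrable_const 1).indicator hB₀)
    _ =ᵐ[μ] fun ω ↦ (μ⟦A | m₁⟧) ω * (μ⟦B | m₁⟧) ω :=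
        hcA.symm.mul (Filter.EventuallyEq.refl _ _)

lemma integrable_condExp_indicator_of_absolutelyContinuous {ν : Measure Ω} [IsFiniteMeasure ν]
    (hνμ : ν ≪ μ) (hm₁ : m₁ ≤ m₀) (A : Set Ω) : Integrable (μ⟦A | m₁⟧) ν := by
  refine .of_bound (stronglyMeasurable_condExp.mono hm₁).aestronglyMeasurable 1 ?_
  refine hνμ.ae_le (ae_bdd_abs_condExp_of_ae_bdd_abs (R := (1 : ℝ)) (.of_forall fun ω ↦ ?_))
  by_cases hω : ω ∈ A <;> simp [hω]

lemma ae_withDensity_eq_of_ae_ne_zero {f : Ω → ENNReal} (hf : AEMeasurable f μ)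
    (hf₀ : ∀ᵐ x ∂μ, f x ≠ 0) : ae (μ.withDensity f) = ae μ :=
  le_antisymm (withDensity_absolutelyContinuous μ f).ae_le
    (withDensity_absolutelyContinuous' hf hf₀).ae_le

end CondExp

section Pi

variable {ι : Type*} {α : ι → Type*} [mα : ∀ i, MeasurableSpace (α i)]

abbrev coordSigma (S : Set ι) : MeasurableSpace (∀ i, α i) :=
  MeasurableSpace.comap (fun f (i : S) ↦ f i) inferInstance

lemma coordSigma_eq_iSup (S : Set ι) :
    coordSigma S = ⨆ i ∈ S, (mα i).comap fun f : ∀ i, α i ↦ f i := by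
  rw [coordSigma, MeasurableSpace.pi, MeasurableSpace.comap_iSup, iSup_subtype']
  simp only [MeasurableSpace.comap_comp]
  rfl

lemma coordSigma_union (S T : Set ι) :
    coordSigma (α := α) (S ∪ T) = coordSigma S ⊔ coordSigma T := by
  simp only [coordSigma_eq_iSup, iSup_union]

lemma coordSigma_mono {S T : Set ι} (h : S ⊆ T) : coordSigma (α := α) S ≤ coordSigma T := by
  simp only [coordSigma_eq_iSup]
  exact biSup_mono h

lemma coordSigma_le (S : Set ι) : coordSigma (α := α) S ≤ MeasurableSpace.pi :=
  (Set.measurable_restrict S).comap_le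

lemma condExp_coordSigma_union_ae_eq_of_condIndepFun [StandardBorelSpace (∀ i, α i)]
    {P : Measure (∀ i, α i)} [IsFiniteMeasure P] {S T U : Set ι}
    (h : CondIndepFun (coordSigma U) (coordSigma_le U) (fun f (i : S) ↦ f i)
      (fun f (i : T) ↦ f i) P)
    {s : Set (∀ i : S, α i)} (hs : MeasurableSet s) :
    P⟦(fun f (i : S) ↦ f i) ⁻¹' s | coordSigma (T ∪ U)⟧
      =ᵐ[P] P⟦(fun f (i : S) ↦ f i) ⁻¹' s | coordSigma U⟧ := by
  rw [coordSigma_union]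
  refine condExp_indicator_sup_ae_eq (coordSigma_le _) (coordSigma_le _)
    (Set.measurable_restrict S hs) fun B hB ↦ ?_
  obtain ⟨t, ht, rfl⟩ := hB
  exact (condIndepFun_iff_condExp_inter_preimage_eq_mul (Set.measurable_restrict S)
    (Set.measurable_restrict T)).1 h s t hs ht

variable [Fintype ι]

lemma indep_coordSigma_of_disjoint (ν : ∀ i, Measure (α i)) [∀ i, IsProbabilityMeasure (ν i)]
    {S T : Set ι} (h : Disjoint S T) :
    Indep (coordSigma S) (coordSigma T) (Measure.pi ν) := by
  rw [coordSigma_eq_iSup, coordSigma_eq_iSup]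
  exact indep_iSup_of_disjoint (fun i ↦ (measurable_pi_apply i).comap_le)
    ((iIndepFun_iff_iIndep _ _ _).1 (iIndepFun_pi (X := fun _ ↦ id) fun _ ↦ aemeasurable_id)) h

lemma ae_eq_condExp_coordSigma_of_ae_eq (ν : ∀ i, Measure (α i))
    [∀ i, IsProbabilityMeasure (ν i)] {S T U : Set ι} (hST : Disjoint S T) (hUT : Disjoint U T)
    {g h : (∀ i, α i) → ℝ} (hg : StronglyMeasurable[coordSigma (S ∪ U)] g)
    (hgi : Integrable g (Measure.pi ν)) (hh : StronglyMeasurable[coordSigma (T ∪ U)] h)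
    (hgh : h =ᵐ[Measure.pi ν] g) :
    h =ᵐ[Measure.pi ν] (Measure.pi ν)[g | coordSigma U] := by
  rw [coordSigma_union] at hg hh
  refine ae_eq_condExp_of_ae_eq_of_indep (coordSigma_le S) (coordSigma_le T) (coordSigma_le U)
    ?_ hg hgi hh hgh
  rw [← coordSigma_union]
  exact indep_coordSigma_of_disjoint ν (Set.disjoint_union_right.2 ⟨hST.symm, hUT.symm⟩)

lemma neZero_of_neZero_pi {μ : ∀ i, Measure (α i)} [∀ i, SigmaFinite (μ i)]
    [NeZero (Measure.pi μ)] (i : ι) :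
    NeZero (μ i) := by
  refine ⟨fun h0 ↦ NeZero.ne (Measure.pi μ) (Measure.measure_univ_eq_zero.mp ?_)⟩
  rw [Measure.pi_univ]
  exact Finset.prod_eq_zero (Finset.mem_univ i) (by simp [h0])

lemma pi_withDensity (ν : ∀ i, Measure (α i)) [∀ i, IsProbabilityMeasure (ν i)]
    {f : ∀ i, α i → ENNReal} (hf : ∀ i, Measurable (f i))
    [∀ i, SigmaFinite ((ν i).withDensity (f i))] :
    Measure.pi (fun i ↦ (ν i).withDensity (f i))
      = (Measure.pi ν).withDensity fun x ↦ ∏ i, f i (x i) := by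
  refine Measure.pi_eq fun s hs ↦ ?_
  have hind : (Set.univ.pi s).indicator (fun x ↦ ∏ i, f i (x i))
      = fun x ↦ ∏ i, (s i).indicator (f i) (x i) := by
    ext x
    by_cases hx : x ∈ Set.univ.pi s
    · rw [Set.indicator_of_mem hx]
      exact Finset.prod_congr rfl fun i _ ↦ (Set.indicator_of_mem (hx i trivial) _).symm
    · obtain ⟨i, hi⟩ : ∃ i, x i ∉ s i := by simpa [Set.mem_pi] using hx
      rw [Set.indicator_of_notMem hx]
      exact (Finset.prod_eq_zero (Finset.mem_univ i) (Set.indicator_of_notMem hi _)).symm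
  rw [withDensity_apply _ (.univ_pi hs), ← lintegral_indicator (.univ_pi hs), hind,
    lintegral_prod_eq_prod_lintegral_of_indepFun Finset.univ _
      (iIndepFun_pi fun i ↦ ((hf i).indicator (hs i)).aemeasurable)
      fun i ↦ ((hf i).indicator (hs i)).comp (measurable_pi_apply i)]
  refine Finset.prod_congr rfl fun i _ ↦ ?_
  rw [withDensity_apply _ (hs i), ← lintegral_indicator (hs i),
    ← (measurePreserving_eval ν i).lintegral_comp ((hf i).indicator (hs i))]

lemma ae_pi_toFinite (μ : ∀ i, Measure (α i)) [∀ i, SigmaFinite (μ i)] [∀ i, NeZero (μ i)] :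
    ae (Measure.pi fun i ↦ (μ i).toFinite) = ae (Measure.pi μ) := by
  set ν := fun i ↦ (μ i).toFinite
  have hμ (i : ι) : (ν i).withDensity ((μ i).rnDeriv (ν i)) = μ i :=
    Measure.withDensity_rnDeriv_eq _ _ (absolutelyContinuous_toFinite (μ i))
  have (i : ι) : SigmaFinite ((ν i).withDensity ((μ i).rnDeriv (ν i))) := by
    rw [hμ i]; infer_instance
  have hpi : Measure.pi μ
      = (Measure.pi ν).withDensity fun x ↦ ∏ i, (μ i).rnDeriv (ν i) (x i) := by
    rw [← pi_withDensity ν fun i ↦ Measure.measurable_rnDeriv _ _]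
    simp only [hμ]
  have hpos : ∀ᵐ x ∂Measure.pi ν, ∏ i, (μ i).rnDeriv (ν i) (x i) ≠ 0 := by
    simp only [Finset.prod_ne_zero_iff, Finset.mem_univ, forall_true_left]
    refine Filter.eventually_all.2 fun i ↦ (Measure.quasiMeasurePreserving_eval ν i).ae
      (p := fun y ↦ (μ i).rnDeriv (ν i) y ≠ 0) ?_
    have h := Measure.rnDeriv_pos (absolutelyContinuous_toFinite (μ i))
    rw [← ae_toFinite] at h
    exact h.mono fun _ hx ↦ hx.ne'
  rw [hpi]
  exact (ae_withDensity_eq_of_ae_ne_zero (Finset.measurable_prod _ fun i _ ↦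
    (Measure.measurable_rnDeriv _ _).comp (measurable_pi_apply i)).aemeasurable hpos).symm

end Pi

theorem condIndep_intersection_of_pos_density_general
    {V : Type*} [Fintype V] (𝒳 : V → Type*)
    [∀ v, MeasurableSpace (𝒳 v)] [StandardBorelSpace (∀ v, 𝒳 v)]
    (μ : ∀ v, Measure (𝒳 v)) [∀ v, SigmaFinite (μ v)]
    (p : (∀ v, 𝒳 v) → ENNReal) (hp : Measurable p) (hppos : ∀ x, 0 < p x)
    (P : Measure (∀ v, 𝒳 v)) [IsProbabilityMeasure P]
    (hP : P = (Measure.pi μ).withDensity p)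
    (X Y Z W : Set V)
    (hYW : Disjoint Y W) (hZW : Disjoint Z W)
    (h1 : CondIndepFun
      (MeasurableSpace.comap (fun f (v : ↥(W ∪ Z)) => f v.1) inferInstance)
      ((measurable_pi_lambda _ (fun v => measurable_pi_apply _)).comap_le)
      (fun f (v : X) => f v.1) (fun f (v : Y) => f v.1) P)
    (h2 : CondIndepFun
      (MeasurableSpace.comap (fun f (v : ↥(Y ∪ Z)) => f v.1) inferInstance)
      ((measurable_pi_lambda _ (fun v => measurable_pi_apply _)).comap_le)
      (fun f (v : X) => f v.1) (fun f (v : W) => f v.1) P) :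
    CondIndepFun
      (MeasurableSpace.comap (fun f (v : Z) => f v.1) inferInstance)
      ((measurable_pi_lambda _ (fun v => measurable_pi_apply _)).comap_le)
      (fun f (v : X) => f v.1) (fun f (v : ↥(Y ∪ W)) => f v.1) P := by
  have : NeZero (Measure.pi μ) := ⟨fun h ↦ IsProbabilityMeasure.ne_zero P (by simp [hP, h])⟩
  have := neZero_of_neZero_pi (μ := μ)
  set Q := Measure.pi fun v ↦ (μ v).toFinite
  have hPQ : ae P = ae Q := by
    rw [hP, ae_withDensity_eq_of_ae_ne_zero hp.aemeasurable (.of_forall fun x ↦ (hppos x).ne'),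
      ae_pi_toFinite]
  refine (condIndepFun_iff_condExp_inter_preimage_eq_mul (Set.measurable_restrict X)
    (Set.measurable_restrict (Y ∪ W))).2 fun s t hs ht ↦ ?_
  have hW := condExp_coordSigma_union_ae_eq_of_condIndepFun h1 hs
  have hY := condExp_coordSigma_union_ae_eq_of_condIndepFun h2 hs
  rw [Set.union_left_comm] at hY
  have hWZ := ae_eq_condExp_coordSigma_of_ae_eq _ hYW hZW stronglyMeasurable_condExp
    (integrable_condExp_indicator_of_absolutelyContinuous
      (Measure.ae_le_iff_absolutelyContinuous.1 hPQ.ge) (coordSigma_le _) _)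
    stronglyMeasurable_condExp (hPQ ▸ hW.symm.trans hY)
  refine condExp_indicator_inter_ae_eq_mul
    (coordSigma_mono (Set.subset_union_right.trans Set.subset_union_right))
    (coordSigma_le _) (Set.measurable_restrict X hs) ?_
    stronglyMeasurable_condExp (hW.trans (hPQ ▸ hWZ))
  exact coordSigma_mono (Set.union_subset_union_right Y Set.subset_union_left) _ ⟨t, ht, rfl⟩

/-- Conditional independence of coordinate projections under a
probability distribution on a product of standard Borel spaces that admits a strictly
positive density with respect to a product measure satisfies the intersection property:
for pairwise disjoint coordinate sets `X, Y, Z, W`, if `X ⟂ Y | W ∪ Z` and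
`X ⟂ W | Y ∪ Z` then `X ⟂ Y ∪ W | Z`. -/
theorem condIndep_intersection_of_pos_density
    {V : Type*} [Fintype V] (𝒳 : V → Type*)
    [∀ v, MeasurableSpace (𝒳 v)] [∀ v, StandardBorelSpace (𝒳 v)]
    [∀ v, Nonempty (𝒳 v)] [StandardBorelSpace (∀ v, 𝒳 v)]
    (μ : ∀ v, Measure (𝒳 v)) [∀ v, SigmaFinite (μ v)]
    (p : (∀ v, 𝒳 v) → ENNReal) (hp : Measurable p) (hppos : ∀ x, 0 < p x)
    (P : Measure (∀ v, 𝒳 v)) [IsProbabilityMeasure P]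
    (hP : P = (Measure.pi μ).withDensity p)
    (X Y Z W : Set V)
    (hXY : Disjoint X Y) (hXZ : Disjoint X Z) (hXW : Disjoint X W)
    (hYZ : Disjoint Y Z) (hYW : Disjoint Y W) (hZW : Disjoint Z W)
    (h1 : CondIndepFun
      (MeasurableSpace.comap (fun f (v : ↥(W ∪ Z)) => f v.1) inferInstance)
      ((measurable_pi_lambda _ (fun v => measurable_pi_apply _)).comap_le)
      (fun f (v : X) => f v.1) (fun f (v : Y) => f v.1) P)
    (h2 : CondIndepFun
      (MeasurableSpace.comap (fun f (v : ↥(Y ∪ Z)) => f v.1) inferInstance)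
      ((measurable_pi_lambda _ (fun v => measurable_pi_apply _)).comap_le)
      (fun f (v : X) => f v.1) (fun f (v : W) => f v.1) P) :
    CondIndepFun
      (MeasurableSpace.comap (fun f (v : Z) => f v.1) inferInstance)
      ((measurable_pi_lambda _ (fun v => measurable_pi_apply _)).comap_le)
      (fun f (v : X) => f v.1) (fun f (v : ↥(Y ∪ W)) => f v.1) P :=
  condIndep_intersection_of_pos_density_general 𝒳 μ p hp hppos P hP X Y Z W hYW hZW h1 h2
end
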